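/- arXiv:1905.05312 — 9 statements merged into one kernel-verified Lean document; each statement's English description precedes it below -/
import Mathlib

section
/- Every graph G on n vertices with m edges and t triangles can be made bipartite by deleting at most m - 4m²/n² + 6t/n edges. -/
/-!
Take `S = N(v)` for a suitable vertex `v`. For any `S`, the number of edges inside `S` or inside
`Sᶜ` is `m + 2 e(S) - ∑_{x ∈ S} d(x)`, where `e(S)` counts the edges inside `S`, and `e(N(v))` is
the number of triangles through `v`. Summed over all `v` this gives `m n + 6 t - ∑_x d(x)²`, which
is at most `m n + 6 t - 4 m² / n` by Cauchy–Schwarz; some `v` is at most the average.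
-/

open Finset SimpleGraph

namespace SimpleGraph

variable {V : Type*} [Fintype V] [DecidableEq V] (G : SimpleGraph V) [DecidableRel G.Adj]

theorem sum_degree_eq_sum_card_filter_mem_edge (S : Finset V) :
    ∑ x ∈ S, G.degree x = ∑ e ∈ G.edgeFinset, #{x ∈ S | x ∈ e} := by
  simp_rw [← card_incidenceFinset_eq_degree, incidenceFinset_eq_filter]
  exact sum_card_bipartiteAbove_eq_sum_card_bipartiteBelow (fun x e => x ∈ e)

def numSameSideEdges (S : Finset V) : ℕ :=
  #(G.edgeFinset ∩ S.sym2) + #(G.edgeFinset ∩ Sᶜ.sym2)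

theorem numSameSideEdges_add_sum_degree (S : Finset V) :
    G.numSameSideEdges S + ∑ x ∈ S, G.degree x
      = #G.edgeFinset + 2 * #(G.edgeFinset ∩ S.sym2) := by
  have edge_count : ∀ e ∈ G.edgeFinset,
      ((if e ∈ S.sym2 then 1 else 0) + (if e ∈ Sᶜ.sym2 then 1 else 0) + #{x ∈ S | x ∈ e})
        = 1 + 2 * if e ∈ S.sym2 then 1 else 0 := by
    intro e he
    induction e using Sym2.ind with
    | h x y =>
      have hxy : x ≠ y := (G.mem_edgeFinset.1 he).ne
      by_cases hx : x ∈ S <;> by_cases hy : y ∈ S <;> simp [hx, hy, hxy, filter_or, filter_eq']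
  simp_rw [numSameSideEdges, ← filter_mem_eq_inter, card_filter,
    sum_degree_eq_sum_card_filter_mem_edge, ← sum_add_distrib, sum_congr rfl edge_count,
    sum_add_distrib, mul_sum, sum_const, smul_eq_mul, mul_one]

theorem card_edgeFinset_inter_sym2_neighborFinset (v : V) :
    #(G.edgeFinset ∩ (G.neighborFinset v).sym2) = #{T ∈ G.cliqueFinset 3 | v ∈ T} := by
  have not_mem_of_mem_sym2 {e : Sym2 V} (he : e ∈ (G.neighborFinset v).sym2) : v ∉ e :=
    fun hv => G.loopless.irrefl v (by simpa using mem_sym2_iff.1 he v hv)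
  refine card_nbij (fun e => insert v e.toFinset) ?_ ?_ ?_
  · intro e he
    simp only [coe_inter, Set.mem_inter_iff, mem_coe, mem_edgeFinset] at he
    induction e using Sym2.ind with
    | h x y =>
      simp_all [Sym2.toFinset_mk_eq, is3Clique_triple_iff]
  · intro e₁ he₁ e₂ he₂ h
    have h₁ := not_mem_of_mem_sym2 (mem_inter.1 he₁).2
    have h₂ := not_mem_of_mem_sym2 (mem_inter.1 he₂).2
    ext z
    by_cases hz : z = v
    · subst hz; simp [h₁, h₂]
    · simpa [hz] using congrArg (z ∈ ·) h
  · intro T hT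
    simp only [coe_filter, Set.mem_ofPred_eq, mem_cliqueFinset_iff] at hT
    obtain ⟨hT, hvT⟩ := hT
    obtain ⟨x, y, hxy, hxyT⟩ := card_eq_two.1 (by rw [card_erase_of_mem hvT, hT.card_eq] :
      #(T.erase v) = 2)
    have hx : x ∈ T.erase v := by simp [hxyT]
    have hy : y ∈ T.erase v := by simp [hxyT]
    rw [mem_erase] at hx hy
    refine ⟨s(x, y), ?_, ?_⟩
    · simpa using ⟨hT.isClique hx.2 hy.2 hxy, hT.isClique hvT hx.2 hx.1.symm,
        hT.isClique hvT hy.2 hy.1.symm⟩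
    · simp [Sym2.toFinset_mk_eq, ← hxyT, insert_erase hvT]

theorem sum_card_filter_mem_cliqueFinset (k : ℕ) :
    ∑ v, #{T ∈ G.cliqueFinset k | v ∈ T} = k * #(G.cliqueFinset k) := by
  have double_count := sum_card_bipartiteAbove_eq_sum_card_bipartiteBelow (fun v T => v ∈ T)
    (s := univ) (t := G.cliqueFinset k)
  simp only [bipartiteAbove, bipartiteBelow, filter_mem_eq_inter, univ_inter] at double_count
  rw [double_count, sum_congr rfl fun T hT => (mem_cliqueFinset_iff.1 hT).card_eq, sum_const,
    smul_eq_mul, mul_comm]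

omit [DecidableEq V] in
theorem sum_sum_degree_neighborFinset :
    ∑ v, ∑ x ∈ G.neighborFinset v, G.degree x = ∑ v, G.degree v ^ 2 := by
  rw [sum_comm' (t' := univ) (s' := fun x => G.neighborFinset x) (by simp [G.adj_comm])]
  simp [sq]

theorem sum_numSameSideEdges_neighborFinset_add_sum_degree_sq :
    ∑ v, G.numSameSideEdges (G.neighborFinset v) + ∑ v, G.degree v ^ 2
      = #G.edgeFinset * Fintype.card V + 6 * #(G.cliqueFinset 3) :=
  calc _ = ∑ v, (G.numSameSideEdges (G.neighborFinset v)
          + ∑ x ∈ G.neighborFinset v, G.degree x) := by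
        rw [← sum_sum_degree_neighborFinset, ← sum_add_distrib]
    _ = ∑ v, (#G.edgeFinset + 2 * #{T ∈ G.cliqueFinset 3 | v ∈ T}) := by
        simp_rw [numSameSideEdges_add_sum_degree, card_edgeFinset_inter_sym2_neighborFinset]
    _ = _ := by
        rw [sum_add_distrib, ← mul_sum, sum_card_filter_mem_cliqueFinset, sum_const, card_univ,
          smul_eq_mul]
        ring

end SimpleGraph

/-- Every graph `G` on `n ≥ 1` vertices with `m` edges and `t` triangles can be made
bipartite by deleting at most `m - 4m²/n² + 6t/n` edges: there is a partition of the
vertex set into `S` and `Sᶜ` such that the number of edges with both endpoints in the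
same part is at most that quantity. -/
theorem make_bipartite {V : Type*} [Fintype V] [DecidableEq V] (G : SimpleGraph V)
    [DecidableRel G.Adj] (n m t : ℕ) (hn : Fintype.card V = n) (hn1 : 1 ≤ n)
    (hm : G.edgeFinset.card = m) (ht : (G.cliqueFinset 3).card = t) :
    ∃ S : Finset V,
      (((G.edgeFinset ∩ S.sym2).card + (G.edgeFinset ∩ Sᶜ.sym2).card : ℕ) : ℝ)
        ≤ m - 4 * m ^ 2 / n ^ 2 + 6 * t / n := by
  have : Nonempty V := Fintype.card_pos_iff.1 (hn ▸ hn1)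
  obtain ⟨v, -, hv⟩ : ∃ v ∈ univ,
      n * G.numSameSideEdges (G.neighborFinset v) ≤ ∑ w, G.numSameSideEdges (G.neighborFinset w) :=
    exists_le_of_sum_le univ_nonempty (by rw [← mul_sum, sum_const, card_univ, hn, smul_eq_mul])
  have key := G.sum_numSameSideEdges_neighborFinset_add_sum_degree_sq
  have cauchy_schwarz := sq_sum_le_card_mul_sum_sq (s := univ) (f := fun v => G.degree v)
  rw [hm, ht, hn] at key
  rw [sum_degrees_eq_twice_card_edges, hm, card_univ, hn] at cauchy_schwarz
  have hcount : n * (n * G.numSameSideEdges (G.neighborFinset v)) + (2 * m) ^ 2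
      ≤ n * (m * n + 6 * t) :=
    calc _ ≤ n * ∑ w, G.numSameSideEdges (G.neighborFinset w) + n * ∑ w, G.degree w ^ 2 :=
          add_le_add (Nat.mul_le_mul_left n hv) cauchy_schwarz
      _ = n * (m * n + 6 * t) := by rw [← mul_add, key]
  refine ⟨G.neighborFinset v, (?_ : (G.numSameSideEdges (G.neighborFinset v) : ℝ) ≤ _)⟩
  have hn_pos : (0 : ℝ) < n := by exact_mod_cast hn1
  rw [show (m : ℝ) - 4 * m ^ 2 / n ^ 2 + 6 * t / n
      = (m * n ^ 2 - 4 * m ^ 2 + 6 * t * n) / n ^ 2 by field_simp, le_div_iff₀ (by positivity)]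
  have := (Nat.cast_le (α := ℝ)).2 hcount
  push_cast at this
  linarith
end

section
/- For any graph G on n vertices, there exists a vertex x such that the number of edges inside N(x) plus the number of edges inside the complement of N(x) is at most m + 6t/n - 4m²/n², where m is the number of edges and t the number of triangles of G. -/
open Finset SimpleGraph

section AuxLemmas

variable {V : Type*} [Fintype V] [DecidableEq V] (G : SimpleGraph V) [DecidableRel G.Adj]

/-- The unordered pair as a finset. -/
def sym2ToFinset : Sym2 V → Finset V :=
  Sym2.lift ⟨fun a b => ({a, b} : Finset V), fun a b => Finset.pair_comm a b⟩

@[simp] lemma sym2ToFinset_mk (a b : V) : sym2ToFinset s(a, b) = {a, b} := rfl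

lemma filterA (u v : V) (huv : G.Adj u v) :
    univ.filter (fun x => s(u, v) ∈ (G.neighborFinset x).sym2)
      = G.neighborFinset u ∩ G.neighborFinset v := by
  ext x
  simp only [mem_filter, mem_univ, true_and, Finset.mk_mem_sym2_iff, mem_inter,
    mem_neighborFinset]
  constructor
  · rintro ⟨h1, h2⟩; exact ⟨h1.symm, h2.symm⟩
  · rintro ⟨h1, h2⟩; exact ⟨h1.symm, h2.symm⟩

lemma filterB (u v : V) :
    univ.filter (fun x => s(u, v) ∈ ((G.neighborFinset x)ᶜ).sym2)
      = (G.neighborFinset u ∪ G.neighborFinset v)ᶜ := by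
  ext x
  simp only [mem_filter, mem_univ, true_and, Finset.mk_mem_sym2_iff, Finset.mem_compl,
    mem_union, mem_neighborFinset, not_or]
  constructor
  · rintro ⟨h1, h2⟩; exact ⟨fun h => h1 h.symm, fun h => h2 h.symm⟩
  · rintro ⟨h1, h2⟩; exact ⟨fun h => h1 h.symm, fun h => h2 h.symm⟩

lemma cardA_eq_triangles (x : V) :
    (G.edgeFinset ∩ (G.neighborFinset x).sym2).card
      = ((G.cliqueFinset 3).filter (fun T => x ∈ T)).card := by
  apply Finset.card_bij (fun e _ => insert x (sym2ToFinset e))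
  · intro e he
    induction e using Sym2.ind with
    | _ u v =>
      rw [mem_inter, mem_edgeFinset, mem_edgeSet, Finset.mk_mem_sym2_iff] at he
      obtain ⟨huv, hu, hv⟩ := he
      rw [mem_neighborFinset] at hu hv
      rw [sym2ToFinset_mk, mem_filter, mem_cliqueFinset_iff]
      exact ⟨is3Clique_triple_iff.2 ⟨hu, hv, huv⟩, by simp⟩
  · intro e1 he1 e2 he2 h
    induction e1 using Sym2.ind with
    | _ u v =>
      induction e2 using Sym2.ind with
      | _ a b =>
        rw [mem_inter, mem_edgeFinset, mem_edgeSet, Finset.mk_mem_sym2_iff] at he1 he2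
        obtain ⟨_, hu, hv⟩ := he1
        obtain ⟨_, ha, hb⟩ := he2
        rw [mem_neighborFinset] at hu hv ha hb
        rw [sym2ToFinset_mk, sym2ToFinset_mk] at h
        have hxu := (G.ne_of_adj hu).symm
        have hxv := (G.ne_of_adj hv).symm
        have hxa := (G.ne_of_adj ha).symm
        have hxb := (G.ne_of_adj hb).symm
        have e1 : ({x, u, v} : Finset V).erase x = {u, v} :=
          Finset.erase_insert (by simp [hxu.symm, hxv.symm])
        have e2 : ({x, a, b} : Finset V).erase x = {a, b} :=
          Finset.erase_insert (by simp [hxa.symm, hxb.symm])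
        have hpair : ({u, v} : Finset V) = {a, b} := by
          rw [← e1, ← e2, h]
        have h1 := Finset.ext_iff.mp hpair
        rw [Sym2.eq_iff]
        have hu' : u = a ∨ u = b := by simpa using (h1 u).mp (by simp)
        have hv' : v = a ∨ v = b := by simpa using (h1 v).mp (by simp)
        have ha' : a = u ∨ a = v := by simpa using (h1 a).mpr (by simp)
        have hb' : b = u ∨ b = v := by simpa using (h1 b).mpr (by simp)
        rcases hu' with rfl | rfl <;> rcases hv' with rfl | rfl <;> tauto
  · intro T hT
    rw [mem_filter, mem_cliqueFinset_iff] at hT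
    obtain ⟨hT3, hxT⟩ := hT
    obtain ⟨a, b, c, hab, hac, hbc, rfl⟩ := is3Clique_iff.mp hT3
    simp only [Finset.mem_insert, Finset.mem_singleton] at hxT
    rcases hxT with rfl | rfl | rfl
    · refine ⟨s(b, c), ?_, ?_⟩
      · rw [mem_inter, mem_edgeFinset, mem_edgeSet, Finset.mk_mem_sym2_iff,
          mem_neighborFinset, mem_neighborFinset]
        exact ⟨hbc, hab, hac⟩
      · simp
    · refine ⟨s(a, c), ?_, ?_⟩
      · rw [mem_inter, mem_edgeFinset, mem_edgeSet, Finset.mk_mem_sym2_iff,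
          mem_neighborFinset, mem_neighborFinset]
        exact ⟨hac, hab.symm, hbc⟩
      · rw [sym2ToFinset_mk]
        ext z; simp; tauto
    · refine ⟨s(a, b), ?_, ?_⟩
      · rw [mem_inter, mem_edgeFinset, mem_edgeSet, Finset.mk_mem_sym2_iff,
          mem_neighborFinset, mem_neighborFinset]
        exact ⟨hab, hac.symm, hbc.symm⟩
      · rw [sym2ToFinset_mk]
        ext z; simp; tauto

lemma sum_triangles (t : ℕ) (ht : (G.cliqueFinset 3).card = t) :
    ∑ x : V, ((G.cliqueFinset 3).filter (fun T => x ∈ T)).card = 3 * t := by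
  simp_rw [Finset.card_filter]
  rw [Finset.sum_comm]
  have : ∀ T ∈ G.cliqueFinset 3, (∑ x : V, if x ∈ T then 1 else 0) = 3 := by
    intro T hT
    rw [Finset.sum_ite_mem, Finset.univ_inter, Finset.sum_const, smul_eq_mul, mul_one]
    exact (SimpleGraph.mem_cliqueFinset_iff.mp hT).card_eq
  rw [Finset.sum_congr rfl this, Finset.sum_const, smul_eq_mul, ht, Nat.mul_comm]

lemma per_edge : ∀ e ∈ G.edgeFinset,
    (∑ x : V, if e ∈ ((G.neighborFinset x)ᶜ).sym2 then 1 else 0)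
      + (∑ x : V, if x ∈ e then G.degree x else 0)
    = Fintype.card V + ∑ x : V, if e ∈ (G.neighborFinset x).sym2 then 1 else 0 := by
  intro e
  induction e using Sym2.ind with
  | _ u v =>
    intro he
    rw [mem_edgeFinset, mem_edgeSet] at he
    have hA : (∑ x : V, if s(u, v) ∈ (G.neighborFinset x).sym2 then 1 else 0)
        = (G.neighborFinset u ∩ G.neighborFinset v).card := by
      rw [← Finset.card_filter, filterA G u v he]
    have hB : (∑ x : V, if s(u, v) ∈ ((G.neighborFinset x)ᶜ).sym2 then 1 else 0)
        = ((G.neighborFinset u ∪ G.neighborFinset v)ᶜ).card := by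
      rw [← Finset.card_filter, filterB G u v]
    have hD : (∑ x : V, if x ∈ s(u, v) then G.degree x else 0)
        = G.degree u + G.degree v := by
      rw [← Finset.sum_filter,
        show Finset.univ.filter (fun x => x ∈ s(u, v)) = ({u, v} : Finset V) from by
          ext z; simp [Sym2.mem_iff],
        Finset.sum_pair (G.ne_of_adj he)]
    rw [hA, hB, hD]
    have h1 := Finset.card_add_card_compl (G.neighborFinset u ∪ G.neighborFinset v)
    have h2 := Finset.card_union_add_card_inter (G.neighborFinset u) (G.neighborFinset v)
    simp only [card_neighborFinset_eq_degree] at h2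
    omega

lemma key_identity (n m t : ℕ) (hn : Fintype.card V = n)
    (hm : G.edgeFinset.card = m) (ht : (G.cliqueFinset 3).card = t) :
    (∑ x : V, ((G.edgeFinset ∩ (G.neighborFinset x).sym2).card
      + (G.edgeFinset ∩ ((G.neighborFinset x)ᶜ).sym2).card))
      + ∑ x : V, (G.degree x) ^ 2 = n * m + 6 * t := by
  have hA : ∑ x : V, (G.edgeFinset ∩ (G.neighborFinset x).sym2).card = 3 * t := by
    rw [Finset.sum_congr rfl fun x _ => cardA_eq_triangles G x, sum_triangles G t ht]
  have hAswap : ∑ x : V, (G.edgeFinset ∩ (G.neighborFinset x).sym2).card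
      = ∑ e ∈ G.edgeFinset, ∑ x : V, if e ∈ (G.neighborFinset x).sym2 then 1 else 0 := by
    rw [Finset.sum_comm]
    exact Finset.sum_congr rfl fun x _ => by
      rw [← Finset.filter_mem_eq_inter, Finset.card_filter]
  have hBswap : ∑ x : V, (G.edgeFinset ∩ ((G.neighborFinset x)ᶜ).sym2).card
      = ∑ e ∈ G.edgeFinset, ∑ x : V, if e ∈ ((G.neighborFinset x)ᶜ).sym2 then 1 else 0 := by
    rw [Finset.sum_comm]
    exact Finset.sum_congr rfl fun x _ => by
      rw [← Finset.filter_mem_eq_inter, Finset.card_filter]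
  have hDswap : ∑ x : V, (G.degree x) ^ 2
      = ∑ e ∈ G.edgeFinset, ∑ x : V, if x ∈ e then G.degree x else 0 := by
    rw [Finset.sum_comm]
    refine Finset.sum_congr rfl fun x _ => ?_
    rw [← Finset.sum_filter, ← incidenceFinset_eq_filter, Finset.sum_const,
      card_incidenceFinset_eq_degree, smul_eq_mul, sq]
  have hsum : (∑ x : V, (G.edgeFinset ∩ ((G.neighborFinset x)ᶜ).sym2).card)
      + ∑ x : V, (G.degree x) ^ 2 = n * m + 3 * t := by
    rw [hBswap, hDswap, ← Finset.sum_add_distrib, Finset.sum_congr rfl (per_edge G),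
      Finset.sum_add_distrib, Finset.sum_const, ← hAswap, hA, hn, hm, smul_eq_mul]
    ring
  rw [Finset.sum_add_distrib, hA]
  omega

end AuxLemmas

/-- For any graph `G` on `n ≥ 1` vertices with `m` edges and `t` triangles, there is a
vertex `x` such that the number of edges inside `N(x)` plus the number of edges inside
the complement of `N(x)` is at most `m + 6t/n - 4m²/n²`. -/
theorem exists_good_vertex {V : Type*} [Fintype V] [DecidableEq V] (G : SimpleGraph V)
    [DecidableRel G.Adj] (n m t : ℕ) (hn : Fintype.card V = n) (hn1 : 1 ≤ n)
    (hm : G.edgeFinset.card = m) (ht : (G.cliqueFinset 3).card = t) :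
    ∃ x : V,
      (((G.edgeFinset ∩ (G.neighborFinset x).sym2).card
        + (G.edgeFinset ∩ ((G.neighborFinset x)ᶜ).sym2).card : ℕ) : ℝ)
        ≤ m + 6 * t / n - 4 * m ^ 2 / n ^ 2 := by
  set f : V → ℕ := fun x => (G.edgeFinset ∩ (G.neighborFinset x).sym2).card
    + (G.edgeFinset ∩ ((G.neighborFinset x)ᶜ).sym2).card with hf
  have hne : (Finset.univ : Finset V).Nonempty := by
    rw [← Finset.card_pos, Finset.card_univ, hn]; omega
  obtain ⟨x, -, hx⟩ := Finset.exists_min_image Finset.univ f hne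
  refine ⟨x, ?_⟩
  have hkey := key_identity G n m t hn hm ht
  have hmin : n * f x ≤ ∑ y : V, f y := by
    have := Finset.card_nsmul_le_sum Finset.univ f (f x) (fun y _ => hx y (Finset.mem_univ y))
    rwa [Finset.card_univ, hn, smul_eq_mul] at this
  -- Cauchy-Schwarz over ℝ
  have hdeg2 : (4 : ℝ) * m ^ 2 ≤ n * ∑ y : V, ((G.degree y : ℝ)) ^ 2 := by
    have hcs := sq_sum_le_card_mul_sum_sq (s := (Finset.univ : Finset V))
      (f := fun y => (G.degree y : ℝ))
    have hsd : ∑ y : V, (G.degree y : ℝ) = 2 * m := by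
      rw [← Nat.cast_sum]
      norm_cast
      rw [G.sum_degrees_eq_twice_card_edges, hm]
    rw [hsd, Finset.card_univ, hn] at hcs
    calc (4 : ℝ) * m ^ 2 = (2 * m) ^ 2 := by ring
    _ ≤ n * ∑ y : V, ((G.degree y : ℝ)) ^ 2 := hcs
  have hnpos : (0 : ℝ) < n := by exact_mod_cast hn1
  have hS : (∑ y : V, (f y : ℝ)) + ∑ y : V, ((G.degree y : ℝ)) ^ 2 = n * m + 6 * t := by
    have := congrArg (Nat.cast : ℕ → ℝ) hkey
    push_cast at this
    simpa [hf] using this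
  rw [show (m : ℝ) + 6 * t / n - 4 * m ^ 2 / n ^ 2
      = ((n * m + 6 * t) * n - 4 * m ^ 2) / n ^ 2 from by field_simp]
  rw [le_div_iff₀ (by positivity)]
  have hmin' : (n : ℝ) * f x ≤ ∑ y : V, (f y : ℝ) := by
    rw [← Nat.cast_sum]; exact_mod_cast hmin
  have h1 : (n : ℝ) * ((n : ℝ) * f x) ≤ (n : ℝ) * ∑ y : V, (f y : ℝ) :=
    mul_le_mul_of_nonneg_left hmin' (le_of_lt hnpos)
  have h2 : (n : ℝ) * ∑ y : V, (f y : ℝ)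
      = (n * m + 6 * t) * n - n * ∑ y : V, ((G.degree y : ℝ)) ^ 2 := by
    rw [← hS]; ring
  nlinarith [h1, h2, hdeg2]
end

section
/- Let c > 0 and let G be a graph with n vertices, at least n²/4 edges, at most c²n³/24 triangles, and book number at most (1/2 - c)n. Then G contains an induced bipartite subgraph on at least n - 48t/(cn²) vertices, where t is the number of triangles of G. -/
open Finset SimpleGraph

section Aux

variable {V : Type*} [Fintype V] [DecidableEq V] (G : SimpleGraph V) [DecidableRel G.Adj]

lemma ibs_sum_nbhd (f : V → ℝ) :
    ∑ u : V, ∑ y ∈ G.neighborFinset u, f y = ∑ y : V, (G.degree y : ℝ) * f y := by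
  have h1 : ∀ u : V, ∑ y ∈ G.neighborFinset u, f y
      = ∑ y : V, if G.Adj u y then f y else 0 := fun u => by
    rw [G.neighborFinset_eq_filter, sum_filter]
  simp_rw [h1]
  rw [Finset.sum_comm]
  refine Finset.sum_congr rfl fun y _ => ?_
  have h2 : ∀ u : V, (if G.Adj u y then f y else 0) = if G.Adj y u then f y else 0 :=
    fun u => if_congr (G.adj_comm u y) rfl rfl
  simp_rw [h2]
  rw [← sum_filter, ← G.neighborFinset_eq_filter, sum_const, G.card_neighborFinset_eq_degree]
  simp [nsmul_eq_mul]

lemma ibs_sum_cod (u : V) :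
    ∑ x : V, ((G.neighborFinset u ∩ G.neighborFinset x).card : ℝ)
      = ∑ y ∈ G.neighborFinset u, (G.degree y : ℝ) := by
  have h1 : ∀ x : V, ((G.neighborFinset u ∩ G.neighborFinset x).card : ℝ)
      = ∑ y ∈ G.neighborFinset u, if x ∈ G.neighborFinset y then (1:ℝ) else 0 := by
    intro x
    have h : G.neighborFinset u ∩ G.neighborFinset x
        = (G.neighborFinset u).filter (fun y => x ∈ G.neighborFinset y) := by
      ext y
      simp only [mem_inter, mem_filter, mem_neighborFinset]
      constructor
      · exact fun hh => ⟨hh.1, hh.2.symm⟩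
      · exact fun hh => ⟨hh.1, hh.2.symm⟩
    rw [h, card_filter]
    push_cast
    rfl
  simp_rw [h1]
  rw [Finset.sum_comm]
  refine Finset.sum_congr rfl fun y _ => ?_
  rw [← sum_filter, filter_mem_eq_inter, univ_inter, sum_const, G.card_neighborFinset_eq_degree]
  simp

lemma ibs_triple_count :
    ∑ u : V, ∑ y ∈ G.neighborFinset u, (G.neighborFinset u ∩ G.neighborFinset y).card
      ≤ 6 * (G.cliqueFinset 3).card := by
  classical
  set P : Finset (V × V × V) :=
    univ.filter (fun p => G.Adj p.1 p.2.1 ∧ G.Adj p.1 p.2.2 ∧ G.Adj p.2.1 p.2.2) with hP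
  have hcard : P.card = ∑ u : V, ∑ y ∈ G.neighborFinset u,
      (G.neighborFinset u ∩ G.neighborFinset y).card := by
    rw [hP, card_filter, Fintype.sum_prod_type]
    refine Finset.sum_congr rfl fun u _ => ?_
    rw [Fintype.sum_prod_type]
    rw [G.neighborFinset_eq_filter, sum_filter]
    refine Finset.sum_congr rfl fun y _ => ?_
    by_cases h : G.Adj u y
    · simp only [if_pos h]
      have hset : univ.filter (fun w => G.Adj u w) ∩ G.neighborFinset y
          = univ.filter (fun z => G.Adj u z ∧ G.Adj y z) := by
        ext z
        simp only [mem_inter, mem_filter, mem_neighborFinset, mem_univ, true_and]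
      rw [hset, card_filter]
      refine Finset.sum_congr rfl fun z _ => ?_
      simp [h]
    · simp only [if_neg h]
      refine Finset.sum_eq_zero fun z _ => ?_
      simp [h]
  have himage : P.image (fun p : V × V × V => ({p.1, p.2.1, p.2.2} : Finset V))
      ⊆ G.cliqueFinset 3 := by
    intro b hb
    obtain ⟨p, hp, rfl⟩ := mem_image.1 hb
    rw [hP, mem_filter] at hp
    rw [mem_cliqueFinset_iff]
    exact is3Clique_triple_iff.2 ⟨hp.2.1, hp.2.2.1, hp.2.2.2⟩
  have hfiber : ∀ b ∈ P.image (fun p : V × V × V => ({p.1, p.2.1, p.2.2} : Finset V)),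
      (P.filter (fun p => ({p.1, p.2.1, p.2.2} : Finset V) = b)).card ≤ 6 := by
    intro b hb
    have hb3 : b.card = 3 := (mem_cliqueFinset_iff.1 (himage hb)).card_eq
    have hsub : P.filter (fun p => ({p.1, p.2.1, p.2.2} : Finset V) = b) ⊆
        b.biUnion (fun x => (b.erase x).biUnion (fun y =>
          ((b.erase x).erase y).image (fun z => (x, y, z)))) := by
      intro q hq
      rw [mem_filter] at hq
      obtain ⟨hqP, hfq⟩ := hq
      rw [hP, mem_filter] at hqP
      obtain ⟨-, h1, h2, h3⟩ := hqP
      have e1 : q.1 ∈ b := by rw [← hfq]; simp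
      have e2 : q.2.1 ∈ b.erase q.1 := by
        rw [mem_erase]
        exact ⟨h1.ne', by rw [← hfq]; simp⟩
      have e3 : q.2.2 ∈ (b.erase q.1).erase q.2.1 := by
        rw [mem_erase, mem_erase]
        exact ⟨h3.ne', h2.ne', by rw [← hfq]; simp⟩
      refine mem_biUnion.2 ⟨q.1, e1, mem_biUnion.2 ⟨q.2.1, e2, mem_image.2 ⟨q.2.2, e3, rfl⟩⟩⟩
    refine le_trans (card_le_card hsub) (le_trans card_biUnion_le ?_)
    have hinner : ∀ x ∈ b, ((b.erase x).biUnion (fun y =>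
        ((b.erase x).erase y).image (fun z => (x, y, z)))).card ≤ 2 := by
      intro x hx
      refine le_trans card_biUnion_le ?_
      have h2 : (b.erase x).card = 2 := by rw [card_erase_of_mem hx, hb3]
      calc ∑ y ∈ b.erase x, (((b.erase x).erase y).image (fun z => (x, y, z))).card
          ≤ ∑ _y ∈ b.erase x, 1 := by
            refine sum_le_sum fun y hy => le_trans card_image_le ?_
            rw [card_erase_of_mem hy, h2]
        _ = 2 := by rw [sum_const, h2, smul_eq_mul, mul_one]
    calc ∑ x ∈ b, ((b.erase x).biUnion (fun y =>
          ((b.erase x).erase y).image (fun z => (x, y, z)))).card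
        ≤ ∑ _x ∈ b, 2 := sum_le_sum hinner
      _ = 6 := by rw [sum_const, hb3, smul_eq_mul]
  calc ∑ u : V, ∑ y ∈ G.neighborFinset u, (G.neighborFinset u ∩ G.neighborFinset y).card
      = P.card := hcard.symm
    _ ≤ 6 * (P.image (fun p : V × V × V => ({p.1, p.2.1, p.2.2} : Finset V))).card :=
        card_le_mul_card_image P 6 hfiber
    _ ≤ 6 * (G.cliqueFinset 3).card := Nat.mul_le_mul_left 6 (card_le_card himage)

end Aux

set_option maxHeartbeats 1000000 in
/-- Let `c > 0` and let `G` be a graph with `n` vertices, at least `n²/4` edges, at most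
`c²n³/24` triangles (`t` denotes the number of triangles), and book number at most
`(1/2 - c)n`. Then `G` contains an induced bipartite subgraph (two disjoint independent
sets `A` and `B`) on at least `n - 48t/(cn²)` vertices. -/
theorem induced_bipartite_subgraph {V : Type*} [Fintype V] [DecidableEq V]
    (G : SimpleGraph V) [DecidableRel G.Adj] (n t : ℕ) (c : ℝ) (hc : 0 < c)
    (hn : Fintype.card V = n) (ht : (G.cliqueFinset 3).card = t)
    (hm : (n : ℝ) ^ 2 / 4 ≤ G.edgeFinset.card)
    (htbound : (t : ℝ) ≤ c ^ 2 * n ^ 3 / 24)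
    (hbook : ∀ u v : V, G.Adj u v →
      ((G.neighborFinset u ∩ G.neighborFinset v).card : ℝ) ≤ (1 / 2 - c) * n) :
    ∃ A B : Finset V, Disjoint A B ∧
      (∀ u ∈ A, ∀ v ∈ A, ¬ G.Adj u v) ∧
      (∀ u ∈ B, ∀ v ∈ B, ¬ G.Adj u v) ∧
      (n : ℝ) - 48 * t / (c * n ^ 2) ≤ (A ∪ B).card := by
  classical
  rcases Nat.eq_zero_or_pos n with hn0 | hn1
  · -- trivial case n = 0
    subst hn0
    have hV : IsEmpty V := Fintype.card_eq_zero_iff.mp hn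
    have ht0 : t = 0 := by
      rw [← ht, Finset.card_eq_zero, Finset.eq_empty_iff_forall_notMem]
      intro s hs
      have h3 := (mem_cliqueFinset_iff.1 hs).card_eq
      have hs0 : s = ∅ := Finset.eq_empty_of_isEmpty s
      rw [hs0] at h3
      simp at h3
    subst ht0
    refine ⟨∅, ∅, by simp, by simp, by simp, ?_⟩
    norm_num
  · -- main case
    have hnV : Nonempty V := by
      rw [← Fintype.card_pos_iff, hn]; exact hn1
    have hnpos : (0:ℝ) < n := by exact_mod_cast hn1
    set nR : ℝ := (n : ℝ) with hnR
    set eR : ℝ := (G.edgeFinset.card : ℝ) with heR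
    set β : ℝ := (1/2 - c) * nR with hβ
    set dg : V → ℝ := fun x => (G.degree x : ℝ) with hdg
    set cd : V → V → ℝ := fun u x => ((G.neighborFinset u ∩ G.neighborFinset x).card : ℝ)
      with hcd
    set Dd : V → ℝ := fun u => ∑ y ∈ G.neighborFinset u, dg y with hDd
    set Td : V → ℝ := fun u => ∑ y ∈ G.neighborFinset u, cd u y with hTd
    set Ff : V → ℝ := fun u => (nR - dg u) * dg u - Dd u + Td u with hFf
    set Gg : V → ℝ := fun u => Ff u + (nR - 2 * dg u)^2 / 2 with hGg
    clear_value Gg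
    clear_value Ff
    clear_value Td
    clear_value Dd
    clear_value cd
    clear_value dg
    clear_value β
    clear_value eR
    clear_value nR
    have hne : nR ≠ 0 := ne_of_gt hnpos
    -- basic facts
    have hcodle : ∀ u x : V, cd u x ≤ dg u := by
      intro u x
      simp only [hcd, hdg]
      have h := card_le_card (inter_subset_left :
        G.neighborFinset u ∩ G.neighborFinset x ⊆ G.neighborFinset u)
      rw [G.card_neighborFinset_eq_degree] at h
      exact_mod_cast h
    have hcodge : ∀ u y : V, dg u + dg y - nR ≤ cd u y := by
      intro u y
      have h1 := card_inter_add_card_union (G.neighborFinset u) (G.neighborFinset y)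
      have h2 : (G.neighborFinset u ∪ G.neighborFinset y).card ≤ n := by
        rw [← hn, ← Finset.card_univ]
        exact card_le_card (subset_univ _)
      have h3 := G.card_neighborFinset_eq_degree u
      have h4 := G.card_neighborFinset_eq_degree y
      have h1' : ((G.neighborFinset u ∩ G.neighborFinset y).card : ℝ)
          + ((G.neighborFinset u ∪ G.neighborFinset y).card : ℝ)
          = (G.degree u : ℝ) + (G.degree y : ℝ) := by
        rw [← h3, ← h4]; exact_mod_cast h1
      have h2' : ((G.neighborFinset u ∪ G.neighborFinset y).card : ℝ) ≤ (n : ℝ) := by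
        exact_mod_cast h2
      simp only [hcd, hdg, hnR]
      linarith
    have hFnn : ∀ u : V, 0 ≤ Ff u := by
      intro u
      have h1 : ∑ y ∈ G.neighborFinset u, (dg u + dg y - nR) ≤ Td u := by
        simp only [hTd]
        exact sum_le_sum fun y _ => hcodge u y
      have h2 : ∑ y ∈ G.neighborFinset u, (dg u + dg y - nR)
          = dg u * (dg u - nR) + Dd u := by
        rw [Finset.sum_sub_distrib, Finset.sum_add_distrib, sum_const, sum_const,
          G.card_neighborFinset_eq_degree]
        simp only [hDd, hdg, nsmul_eq_mul]
        ring
      simp only [hFf]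
      linarith [h1, h2]
    -- sum of Gg
    have hS1 : ∑ x : V, dg x = 2 * eR := by
      simp only [hdg, heR]
      exact_mod_cast G.sum_degrees_eq_twice_card_edges
    have hDDsum : ∑ u : V, Dd u = ∑ y : V, dg y * dg y := by
      simp only [hDd, hdg]
      exact ibs_sum_nbhd G (fun y => (G.degree y : ℝ))
    have hTTsum : ∑ u : V, Td u ≤ 6 * (t : ℝ) := by
      have h := ibs_triple_count G
      rw [ht] at h
      have h2 : ∑ u : V, Td u = ((∑ u : V, ∑ y ∈ G.neighborFinset u,
          (G.neighborFinset u ∩ G.neighborFinset y).card : ℕ) : ℝ) := by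
        push_cast
        simp only [hTd, hcd]
      rw [h2]
      exact_mod_cast h
    have hGsum : ∑ u : V, Gg u ≤ 6 * (t : ℝ) := by
      have hpt : ∀ u : V, Gg u = (nR^2/2 - nR * dg u + dg u * dg u) + Td u - Dd u := by
        intro u
        simp only [hGg, hFf]
        ring
      rw [Finset.sum_congr rfl (fun u _ => hpt u)]
      rw [Finset.sum_sub_distrib, Finset.sum_add_distrib, Finset.sum_add_distrib,
        Finset.sum_sub_distrib, Finset.sum_const, ← Finset.mul_sum, hS1, hDDsum,
        Finset.card_univ, hn]
      have h24 : nR^3/2 ≤ nR * (2 * eR) := by nlinarith [hm, hnpos]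
      simp only [nsmul_eq_mul, ← hnR]
      linarith [hTTsum, h24]
    -- choose u
    obtain ⟨u, -, hu⟩ : ∃ u ∈ (univ : Finset V), Gg u ≤ 6 * (t:ℝ) / nR := by
      refine exists_le_of_sum_le univ_nonempty ?_
      rw [Finset.sum_const, Finset.card_univ, hn, nsmul_eq_mul]
      have heq : (n:ℝ) * (6 * (t:ℝ) / nR) = 6 * t := by
        rw [← hnR]; field_simp [hne]
      rw [heq]; exact hGsum
    have hgub : Gg u ≤ c^2 * nR^2 / 4 := by
      refine le_trans hu ?_
      rw [div_le_div_iff₀ hnpos (by norm_num : (0:ℝ) < 4)]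
      linarith [htbound]
    have hFG : Ff u ≤ Gg u := by
      simp only [hGg]
      linarith [sq_nonneg (nR - 2 * dg u)]
    have hsqle : (nR - 2 * dg u)^2 ≤ 2 * Gg u := by
      simp only [hGg]
      linarith [hFnn u]
    set m1 : ℝ := (dg u - β)/2 with hm1
    set m2 : ℝ := (nR - dg u - β)/2 with hm2
    clear_value m1
    clear_value m2
    have hsum12 : m1 + m2 = c * nR := by simp only [hm1, hm2, hβ]; ring
    have hprodeq : m1 * m2 = (c^2*nR^2 - (nR - 2 * dg u)^2/4)/4 := by
      simp only [hm1, hm2, hβ]; ring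
    have hprodpos : 7*c^2*nR^2/32 ≤ m1 * m2 := by
      rw [hprodeq]
      linarith [hsqle, hgub]
    have hprodpos' : 0 < m1 * m2 :=
      lt_of_lt_of_le (by linarith [mul_pos (mul_pos hc hc) (mul_pos hnpos hnpos)]) hprodpos
    have hcn : 0 < c * nR := mul_pos hc hnpos
    have hm1pos : 0 < m1 := by
      rcases lt_or_ge 0 m1 with h | h
      · exact h
      · exfalso
        have hm2p : 0 < m2 := by linarith
        have hle : m1 * m2 ≤ 0 := mul_nonpos_iff.mpr (Or.inr ⟨h, hm2p.le⟩)
        linarith [hprodpos']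
    have hm2pos : 0 < m2 := by
      rcases lt_or_ge 0 m2 with h | h
      · exact h
      · exfalso
        have hle : m1 * m2 ≤ 0 := mul_nonpos_iff.mpr (Or.inl ⟨hm1pos.le, h⟩)
        linarith [hprodpos']
    -- the two sides
    set A : Finset V := univ.filter (fun x => (dg u + β)/2 < cd u x) with hA
    set B0 : Finset V := univ.filter
      (fun x => (nR - dg u + β)/2 < ((G.neighborFinset x \ G.neighborFinset u).card : ℝ))
      with hB0
    have hdeglt : G.degree u < n := by rw [← hn]; exact G.degree_lt_card_verts u
    have hcompl : ((univ \ G.neighborFinset u).card : ℝ) = nR - dg u := by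
      rw [card_sdiff_of_subset (subset_univ _), Finset.card_univ, hn, G.card_neighborFinset_eq_degree,
        Nat.cast_sub hdeglt.le]
      simp only [hnR, hdg]
    -- independence of A
    have hAind : ∀ x ∈ A, ∀ y ∈ A, ¬ G.Adj x y := by
      intro x hx y hy hadj
      rw [hA, mem_filter] at hx hy
      have h1 : (G.neighborFinset u ∩ G.neighborFinset x)
          ∪ (G.neighborFinset u ∩ G.neighborFinset y) ⊆ G.neighborFinset u :=
        union_subset inter_subset_left inter_subset_left
      have h2 := card_inter_add_card_union (G.neighborFinset u ∩ G.neighborFinset x)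
        (G.neighborFinset u ∩ G.neighborFinset y)
      have h3 : ((G.neighborFinset u ∩ G.neighborFinset x)
          ∩ (G.neighborFinset u ∩ G.neighborFinset y)).card
          ≤ (G.neighborFinset x ∩ G.neighborFinset y).card := by
        refine card_le_card ?_
        intro z hz
        simp only [mem_inter] at hz ⊢
        exact ⟨hz.1.2, hz.2.2⟩
      have h4 := hbook x y hadj
      have h5 : ((G.neighborFinset u).card : ℝ) = dg u := by
        simp only [hdg, G.card_neighborFinset_eq_degree]
      have h1' := card_le_card h1
      have hx2 := hx.2
      have hy2 := hy.2
      simp only [hcd] at hx2 hy2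
      have h2' : (((G.neighborFinset u ∩ G.neighborFinset x)
          ∩ (G.neighborFinset u ∩ G.neighborFinset y)).card : ℝ)
          + (((G.neighborFinset u ∩ G.neighborFinset x)
          ∪ (G.neighborFinset u ∩ G.neighborFinset y)).card : ℝ)
          = ((G.neighborFinset u ∩ G.neighborFinset x).card : ℝ)
          + ((G.neighborFinset u ∩ G.neighborFinset y).card : ℝ) := by exact_mod_cast h2
      have h3' : (((G.neighborFinset u ∩ G.neighborFinset x)
          ∩ (G.neighborFinset u ∩ G.neighborFinset y)).card : ℝ)
          ≤ ((G.neighborFinset x ∩ G.neighborFinset y).card : ℝ) := by exact_mod_cast h3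
      have h1'' : (((G.neighborFinset u ∩ G.neighborFinset x)
          ∪ (G.neighborFinset u ∩ G.neighborFinset y)).card : ℝ)
          ≤ ((G.neighborFinset u).card : ℝ) := by exact_mod_cast h1'
      rw [h5] at h1''
      linarith
    -- independence of B0
    have hBind : ∀ x ∈ B0, ∀ y ∈ B0, ¬ G.Adj x y := by
      intro x hx y hy hadj
      rw [hB0, mem_filter] at hx hy
      have h1 : (G.neighborFinset x \ G.neighborFinset u)
          ∪ (G.neighborFinset y \ G.neighborFinset u) ⊆ univ \ G.neighborFinset u := by
        refine union_subset ?_ ?_ <;>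
          exact sdiff_subset_sdiff (subset_univ _) (Finset.Subset.refl _)
      have h2 := card_inter_add_card_union (G.neighborFinset x \ G.neighborFinset u)
        (G.neighborFinset y \ G.neighborFinset u)
      have h3 : ((G.neighborFinset x \ G.neighborFinset u)
          ∩ (G.neighborFinset y \ G.neighborFinset u)).card
          ≤ (G.neighborFinset x ∩ G.neighborFinset y).card := by
        refine card_le_card ?_
        intro z hz
        simp only [mem_inter, mem_sdiff] at hz ⊢
        exact ⟨hz.1.1, hz.2.1⟩
      have h4 := hbook x y hadj
      have h1' := card_le_card h1
      have hx2 := hx.2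
      have hy2 := hy.2
      have h2' : (((G.neighborFinset x \ G.neighborFinset u)
          ∩ (G.neighborFinset y \ G.neighborFinset u)).card : ℝ)
          + (((G.neighborFinset x \ G.neighborFinset u)
          ∪ (G.neighborFinset y \ G.neighborFinset u)).card : ℝ)
          = ((G.neighborFinset x \ G.neighborFinset u).card : ℝ)
          + ((G.neighborFinset y \ G.neighborFinset u).card : ℝ) := by exact_mod_cast h2
      have h3' : (((G.neighborFinset x \ G.neighborFinset u)
          ∩ (G.neighborFinset y \ G.neighborFinset u)).card : ℝ)
          ≤ ((G.neighborFinset x ∩ G.neighborFinset y).card : ℝ) := by exact_mod_cast h3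
      have h1'' : (((G.neighborFinset x \ G.neighborFinset u)
          ∪ (G.neighborFinset y \ G.neighborFinset u)).card : ℝ)
          ≤ ((univ \ G.neighborFinset u).card : ℝ) := by exact_mod_cast h1'
      rw [hcompl] at h1''
      linarith
    -- u is in A
    have hcduu : cd u u = dg u := by
      simp only [hcd, hdg]
      rw [inter_self, G.card_neighborFinset_eq_degree]
    have hduA : u ∈ A := by
      rw [hA, mem_filter]
      refine ⟨mem_univ u, ?_⟩
      rw [hcduu]
      have h := hm1pos
      simp only [hm1] at h
      linarith
    -- ledger 1 : non-neighbors
    have ht3 : u ∈ univ \ G.neighborFinset u :=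
      mem_sdiff.2 ⟨mem_univ u, G.notMem_neighborFinset_self u⟩
    set C : Finset V := (univ \ G.neighborFinset u).erase u with hC
    have hsumC : ∑ x ∈ C, cd u x = Dd u - Td u - dg u := by
      have t1 : ∑ x : V, cd u x = Dd u := by
        simp only [hcd, hDd, hdg]
        exact ibs_sum_cod G u
      have t2 : ∑ x ∈ univ \ G.neighborFinset u, cd u x = Dd u - Td u := by
        rw [sum_sdiff_eq_sub (subset_univ _), t1]
        simp only [hTd]
      have t4 : cd u u + ∑ x ∈ C, cd u x = ∑ x ∈ univ \ G.neighborFinset u, cd u x := by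
        rw [hC]
        exact Finset.add_sum_erase _ _ ht3
      rw [hcduu] at t4
      linarith
    have hCcard : (C.card : ℝ) = nR - dg u - 1 := by
      rw [hC, card_erase_of_mem ht3, card_sdiff_of_subset (subset_univ _), Finset.card_univ, hn,
        G.card_neighborFinset_eq_degree]
      rw [Nat.cast_sub (by omega : 1 ≤ n - G.degree u), Nat.cast_sub hdeglt.le]
      simp only [hnR, hdg, Nat.cast_one]
    set RR : Finset V := C.filter (fun x => ¬ ((dg u + β)/2 < cd u x)) with hRR
    have hrledger : (RR.card : ℝ) * m1 ≤ Ff u := by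
      have hsplit := sum_filter_add_sum_filter_not C (fun x => (dg u + β)/2 < cd u x)
        (fun x => cd u x)
      have hb1 : ∑ x ∈ C.filter (fun x => (dg u + β)/2 < cd u x), cd u x
          ≤ ((C.filter (fun x => (dg u + β)/2 < cd u x)).card : ℝ) * dg u := by
        have h := Finset.sum_le_card_nsmul (C.filter (fun x => (dg u + β)/2 < cd u x))
          (fun x => cd u x) (dg u) (fun x _ => hcodle u x)
        simpa [nsmul_eq_mul] using h
      have hb2 : ∑ x ∈ RR, cd u x ≤ (RR.card : ℝ) * ((dg u + β)/2) := by
        have h := Finset.sum_le_card_nsmul RR (fun x => cd u x) ((dg u + β)/2)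
          (fun x hx => by
            rw [hRR, mem_filter] at hx
            exact le_of_not_gt hx.2)
        simpa [nsmul_eq_mul] using h
      have hcards : ((C.filter (fun x => (dg u + β)/2 < cd u x)).card : ℝ) + RR.card
          = C.card := by
        rw [hRR]
        exact_mod_cast card_filter_add_card_filter_not
          (p := fun x => (dg u + β)/2 < cd u x)
      have hprod : ((C.filter (fun x => (dg u + β)/2 < cd u x)).card : ℝ) * dg u
          = (nR - dg u - 1 - RR.card) * dg u := by
        have : ((C.filter (fun x => (dg u + β)/2 < cd u x)).card : ℝ)
            = nR - dg u - 1 - RR.card := by linarith [hcards, hCcard]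
        rw [this]
      rw [hprod] at hb1
      simp only [hFf, hm1]
      linarith [hsplit, hsumC, hb1, hb2]
    -- ledger 2 : neighbors
    have hsdiffcard : ∀ x : V, ((G.neighborFinset x \ G.neighborFinset u).card : ℝ)
        = dg x - cd u x := by
      intro x
      have h := card_sdiff_add_card_inter (G.neighborFinset x) (G.neighborFinset u)
      rw [inter_comm] at h
      have h' : ((G.neighborFinset x \ G.neighborFinset u).card : ℝ)
          + ((G.neighborFinset u ∩ G.neighborFinset x).card : ℝ)
          = ((G.neighborFinset x).card : ℝ) := by exact_mod_cast h
      have h'' : ((G.neighborFinset x).card : ℝ) = dg x := by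
        simp only [hdg, G.card_neighborFinset_eq_degree]
      simp only [hcd]
      linarith
    have hsum2 : ∑ x ∈ G.neighborFinset u,
        ((G.neighborFinset x \ G.neighborFinset u).card : ℝ) = Dd u - Td u := by
      rw [Finset.sum_congr rfl (fun x _ => hsdiffcard x), Finset.sum_sub_distrib]
      simp only [hDd, hTd]
    have hball : ∀ x : V, ((G.neighborFinset x \ G.neighborFinset u).card : ℝ)
        ≤ nR - dg u := by
      intro x
      have hsub : G.neighborFinset x \ G.neighborFinset u ⊆ univ \ G.neighborFinset u :=
        sdiff_subset_sdiff (subset_univ _) (Finset.Subset.refl _)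
      have h := card_le_card hsub
      have h' : ((G.neighborFinset x \ G.neighborFinset u).card : ℝ)
          ≤ ((univ \ G.neighborFinset u).card : ℝ) := by exact_mod_cast h
      rw [hcompl] at h'
      exact h'
    set Q1 : Finset V := (G.neighborFinset u).filter
      (fun x => ¬ ((nR - dg u + β)/2 < ((G.neighborFinset x \ G.neighborFinset u).card : ℝ)))
      with hQ1
    have hq1ledger : (Q1.card : ℝ) * m2 ≤ Ff u := by
      have hsplit := sum_filter_add_sum_filter_not (G.neighborFinset u)
        (fun x => (nR - dg u + β)/2 < ((G.neighborFinset x \ G.neighborFinset u).card : ℝ))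
        (fun x => ((G.neighborFinset x \ G.neighborFinset u).card : ℝ))
      have hb1 : ∑ x ∈ (G.neighborFinset u).filter
            (fun x => (nR - dg u + β)/2
              < ((G.neighborFinset x \ G.neighborFinset u).card : ℝ)),
            ((G.neighborFinset x \ G.neighborFinset u).card : ℝ)
          ≤ (((G.neighborFinset u).filter
            (fun x => (nR - dg u + β)/2
              < ((G.neighborFinset x \ G.neighborFinset u).card : ℝ))).card : ℝ)
            * (nR - dg u) := by
        have h := Finset.sum_le_card_nsmul ((G.neighborFinset u).filter
            (fun x => (nR - dg u + β)/2
              < ((G.neighborFinset x \ G.neighborFinset u).card : ℝ)))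
          (fun x => ((G.neighborFinset x \ G.neighborFinset u).card : ℝ)) (nR - dg u)
          (fun x _ => hball x)
        simpa [nsmul_eq_mul] using h
      have hb2 : ∑ x ∈ Q1, ((G.neighborFinset x \ G.neighborFinset u).card : ℝ)
          ≤ (Q1.card : ℝ) * ((nR - dg u + β)/2) := by
        have h := Finset.sum_le_card_nsmul Q1
          (fun x => ((G.neighborFinset x \ G.neighborFinset u).card : ℝ))
          ((nR - dg u + β)/2)
          (fun x hx => by
            rw [hQ1, mem_filter] at hx
            exact le_of_not_gt hx.2)
        simpa [nsmul_eq_mul] using h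
      have hcards : (((G.neighborFinset u).filter
            (fun x => (nR - dg u + β)/2
              < ((G.neighborFinset x \ G.neighborFinset u).card : ℝ))).card : ℝ)
            + Q1.card = dg u := by
        rw [hQ1]
        have h := card_filter_add_card_filter_not
          (s := G.neighborFinset u)
          (p := fun x => (nR - dg u + β)/2
            < ((G.neighborFinset x \ G.neighborFinset u).card : ℝ))
        have h' : (((G.neighborFinset u).filter
            (fun x => (nR - dg u + β)/2
              < ((G.neighborFinset x \ G.neighborFinset u).card : ℝ))).card : ℝ)
            + (((G.neighborFinset u).filter
            (fun x => ¬ ((nR - dg u + β)/2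
              < ((G.neighborFinset x \ G.neighborFinset u).card : ℝ)))).card : ℝ)
            = ((G.neighborFinset u).card : ℝ) := by exact_mod_cast h
        rw [G.card_neighborFinset_eq_degree] at h'
        have hdgu : (G.degree u : ℝ) = dg u := by simp only [hdg]
        rw [hdgu] at h'
        exact h'
      have hprod : (((G.neighborFinset u).filter
            (fun x => (nR - dg u + β)/2
              < ((G.neighborFinset x \ G.neighborFinset u).card : ℝ))).card : ℝ)
            * (nR - dg u) = (dg u - Q1.card) * (nR - dg u) := by
        have : (((G.neighborFinset u).filter
            (fun x => (nR - dg u + β)/2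
              < ((G.neighborFinset x \ G.neighborFinset u).card : ℝ))).card : ℝ)
            = dg u - Q1.card := by linarith [hcards]
        rw [this]
      rw [hprod] at hb1
      simp only [hFf, hm2]
      linarith [hsplit, hsum2, hb1, hb2]
    -- coverage
    have hcover : univ \ (A ∪ B0) ⊆ Q1 ∪ RR := by
      intro x hx
      rw [mem_sdiff, mem_union] at hx
      push_neg at hx
      obtain ⟨-, hxA, hxB⟩ := hx
      by_cases hxu : x ∈ G.neighborFinset u
      · refine mem_union.2 (Or.inl ?_)
        rw [hQ1, mem_filter]
        refine ⟨hxu, fun hlt => hxB ?_⟩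
        rw [hB0, mem_filter]
        exact ⟨mem_univ x, hlt⟩
      · refine mem_union.2 (Or.inr ?_)
        rw [hRR, mem_filter]
        constructor
        · rw [hC, mem_erase]
          refine ⟨fun he => hxA (he ▸ hduA), mem_sdiff.2 ⟨mem_univ x, hxu⟩⟩
        · intro hlt
          exact hxA (by rw [hA, mem_filter]; exact ⟨mem_univ x, hlt⟩)
    have hcardcover : (n:ℝ) ≤ ((A ∪ B0).card : ℝ) + Q1.card + RR.card := by
      have h1 : (univ \ (A ∪ B0)).card ≤ Q1.card + RR.card :=
        (card_le_card hcover).trans (card_union_le _ _)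
      have h2 : (univ \ (A ∪ B0)).card = Fintype.card V - (A ∪ B0).card := by
        rw [card_sdiff_of_subset (subset_univ _), Finset.card_univ]
      have h3 : (A ∪ B0).card ≤ Fintype.card V := by
        rw [← Finset.card_univ]
        exact card_le_card (subset_univ _)
      rw [hn] at h2 h3
      have h4 : n ≤ (A ∪ B0).card + Q1.card + RR.card := by omega
      exact_mod_cast h4
    -- final numeric bound
    have hqr : (Q1.card : ℝ) + RR.card ≤ 48 * t / (c * nR^2) := by
      have hFle : Ff u ≤ 6 * t / nR := le_trans hFG hu
      have ht0 : (0:ℝ) ≤ t := Nat.cast_nonneg t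
      have hkey1 : ((Q1.card : ℝ) + RR.card) * (m1 * m2) ≤ 6 * c * t := by
        have e1 : ((Q1.card:ℝ) * m2) * m1 ≤ Ff u * m1 :=
          mul_le_mul_of_nonneg_right hq1ledger hm1pos.le
        have e2 : ((RR.card:ℝ) * m1) * m2 ≤ Ff u * m2 :=
          mul_le_mul_of_nonneg_right hrledger hm2pos.le
        have e4 : Ff u * (c * nR) ≤ (6 * t / nR) * (c * nR) :=
          mul_le_mul_of_nonneg_right hFle (le_of_lt hcn)
        have e5 : (6 * (t:ℝ) / nR) * (c * nR) = 6 * c * t := by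
          field_simp [hne]
        calc ((Q1.card : ℝ) + RR.card) * (m1 * m2)
            = ((Q1.card:ℝ) * m2) * m1 + ((RR.card:ℝ) * m1) * m2 := by ring
          _ ≤ Ff u * m1 + Ff u * m2 := add_le_add e1 e2
          _ = Ff u * (c * nR) := by rw [← hsum12]; ring
          _ ≤ (6 * t / nR) * (c * nR) := e4
          _ = 6 * c * t := e5
      have hq0 : (0:ℝ) ≤ (Q1.card : ℝ) + RR.card := by positivity
      rw [le_div_iff₀ (by linarith [mul_pos hc (mul_pos hnpos hnpos)] : (0:ℝ) < c * nR^2)]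
      have h1 := mul_le_mul_of_nonneg_left hprodpos hq0
      have h2 : ((Q1.card : ℝ) + RR.card) * (7*c^2*nR^2/32) ≤ 6 * c * t := by
        calc ((Q1.card : ℝ) + RR.card) * (7*c^2*nR^2/32)
            ≤ ((Q1.card : ℝ) + RR.card) * (m1 * m2) := h1
          _ ≤ 6 * c * t := hkey1
      have h5 : ((Q1.card : ℝ) + RR.card) * (c * nR^2) ≤ 192 * t / 7 := by
        have h4 : c * (((Q1.card : ℝ) + RR.card) * (c * nR^2)) ≤ c * (192 * t / 7) := by
          linarith only [h2]
        exact le_of_mul_le_mul_left h4 hc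
      linarith [h5, ht0]
    -- conclude
    refine ⟨A, B0 \ A, disjoint_sdiff_self_right, hAind,
      fun x hx y hy => hBind x (mem_sdiff.1 hx).1 y (mem_sdiff.1 hy).1, ?_⟩
    rw [union_sdiff_self_eq_union]
    have hfinal : (nR : ℝ) - 48 * t / (c * nR^2) ≤ ((A ∪ B0).card : ℝ) := by
      linarith [hcardcover, hqr]
    exact hfinal
end

section
/- For nonnegative integers b and n with n/6 ≤ b ≤ n/4, the blow-up S_{b,n} of the 3-prism graph has exactly ⌊n²/4⌋ edges. -/
/-!
Adjacency in `S_{b,n}` depends only on the parts of the two endpoints, so by the handshake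
lemma twice the number of edges is the sum, over ordered adjacent pairs of parts of the prism,
of the products of their sizes. Writing `c = n - 4b`, `k = ⌊c/2⌋`, `m = ⌈c/2⌉`, this gives
`4b² + 2bc + km` edges, while `⌊(4b + c)²/4⌋ = 4b² + 2bc + ⌊c²/4⌋` and `⌊c²/4⌋ = km`.
-/

open Finset SimpleGraph

/-- Adjacency of the 3-prism graph: two triangles `{(s,0),(s,1),(s,2)}` for `s : Fin 2`,
with a perfect matching between vertices with the same second coordinate. -/
def prismAdj (p q : Fin 2 × Fin 3) : Prop :=
  (p.1 = q.1 ∧ p.2 ≠ q.2) ∨ (p.1 ≠ q.1 ∧ p.2 = q.2)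

/-- The sizes of the six parts of `S_{b,n}`: four parts of size `b` and two parts of
size `⌊(n-4b)/2⌋` and `⌈(n-4b)/2⌉`. -/
def prismPartSize (b n : ℕ) (p : Fin 2 × Fin 3) : ℕ :=
  if p.2 = 2 then (if p.1 = 0 then (n - 4 * b) / 2 else (n - 4 * b) - (n - 4 * b) / 2) else b

/-- The graph `S_{b,n}`, the blow-up of the 3-prism graph. -/
def SGraph (b n : ℕ) : SimpleGraph (Σ p : Fin 2 × Fin 3, Fin (prismPartSize b n p)) where
  Adj x y := prismAdj x.1 y.1
  symm := ⟨by
    rintro x y (⟨h1, h2⟩ | ⟨h1, h2⟩)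
    · exact Or.inl ⟨h1.symm, fun h => h2 h.symm⟩
    · exact Or.inr ⟨fun h => h1 h.symm, h2.symm⟩⟩
  loopless := ⟨by
    rintro x (⟨_, h⟩ | ⟨h, _⟩) <;> exact h rfl⟩

instance (b n : ℕ) : DecidableRel (SGraph b n).Adj := fun x y =>
  decidable_of_iff ((x.1.1 = y.1.1 ∧ x.1.2 ≠ y.1.2) ∨ (x.1.1 ≠ y.1.1 ∧ x.1.2 = y.1.2)) Iff.rfl

instance : DecidableRel prismAdj := fun p q =>
  decidable_of_iff ((p.1 = q.1 ∧ p.2 ≠ q.2) ∨ (p.1 ≠ q.1 ∧ p.2 = q.2)) Iff.rfl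

namespace SimpleGraph

variable {ι : Type*} [Fintype ι] {α : ι → Type*} [∀ i, Fintype (α i)]

theorem degree_eq_sum_of_adj_iff_fst (G : SimpleGraph (Σ i, α i)) [DecidableRel G.Adj]
    (r : ι → ι → Prop) [DecidableRel r] (hG : ∀ x y, G.Adj x y ↔ r x.1 y.1) (i : ι) (a : α i) :
    G.degree ⟨i, a⟩ = ∑ j, if r i j then Fintype.card (α j) else 0 := by
  rw [← card_neighborFinset_eq_degree, neighborFinset_eq_filter, card_filter,
    ← univ_sigma_univ, sum_sigma]
  simp only [hG, sum_ite_irrel, sum_const_zero, sum_const, card_univ, smul_eq_mul, mul_one]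

theorem two_mul_card_edgeFinset_of_adj_iff_fst (G : SimpleGraph (Σ i, α i)) [DecidableRel G.Adj]
    (r : ι → ι → Prop) [DecidableRel r] (hG : ∀ x y, G.Adj x y ↔ r x.1 y.1) :
    2 * #G.edgeFinset =
      ∑ i, ∑ j, if r i j then Fintype.card (α i) * Fintype.card (α j) else 0 := by
  rw [← sum_degrees_eq_twice_card_edges, ← univ_sigma_univ, sum_sigma]
  simp only [degree_eq_sum_of_adj_iff_fst G r hG, sum_const, card_univ, smul_eq_mul, mul_sum,
    mul_ite, mul_zero]

end SimpleGraph

theorem sum_prismAdj_mul (s : Fin 2 × Fin 3 → ℕ) :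
    (∑ p, ∑ q, if prismAdj p q then s p * s q else 0) =
      2 * (s (0, 0) * s (0, 1) + s (0, 0) * s (0, 2) + s (0, 1) * s (0, 2) +
        s (1, 0) * s (1, 1) + s (1, 0) * s (1, 2) + s (1, 1) * s (1, 2) +
        s (0, 0) * s (1, 0) + s (0, 1) * s (1, 1) + s (0, 2) * s (1, 2)) := by
  simp only [Fintype.sum_prod_type, Fin.sum_univ_succ, Fin.sum_univ_zero]
  norm_num [prismAdj, Fin.ext_iff]
  ring

theorem Nat.div_two_mul_sub_div_two (c : ℕ) : c / 2 * (c - c / 2) = c ^ 2 / 4 := by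
  obtain ⟨k, rfl | rfl⟩ := Nat.even_or_odd' c
  · rw [show (2 * k) ^ 2 = k * k * 4 by ring, Nat.mul_div_cancel _ (by norm_num),
      show 2 * k / 2 = k by omega, show 2 * k - k = k by omega]
  · rw [show (2 * k + 1) ^ 2 = 1 + k * (k + 1) * 4 by ring,
      Nat.add_mul_div_right _ _ (by norm_num), show (2 * k + 1) / 2 = k by omega,
      show 2 * k + 1 - k = k + 1 by omega]
    omega

theorem card_edgeFinset_SGraph (b n : ℕ) :
    #(SGraph b n).edgeFinset =
      4 * b ^ 2 + 2 * b * (n - 4 * b) + (n - 4 * b) / 2 * (n - 4 * b - (n - 4 * b) / 2) := by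
  have h2E := two_mul_card_edgeFinset_of_adj_iff_fst (SGraph b n) prismAdj fun _ _ => Iff.rfl
  simp only [Fintype.card_fin, sum_prismAdj_mul] at h2E
  simp +decide only [prismPartSize, if_true, if_false] at h2E
  refine Nat.eq_of_mul_eq_mul_left two_pos (h2E.trans ?_)
  generalize n - 4 * b = c
  have hc : c = c / 2 + (c - c / 2) := by omega
  generalize c / 2 = k, c - c / 2 = m at hc ⊢
  subst hc
  ring

theorem Nat.four_mul_add_sq_div_four (b c : ℕ) :
    (4 * b + c) ^ 2 / 4 = 4 * b ^ 2 + 2 * b * c + c ^ 2 / 4 := by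
  rw [show (4 * b + c) ^ 2 = c ^ 2 + (4 * b ^ 2 + 2 * b * c) * 4 by ring,
    Nat.add_mul_div_right _ _ (by norm_num), add_comm]

theorem SGraph_edge_card_general (b n : ℕ) (h2 : (b : ℝ) ≤ n / 4) :
    (SGraph b n).edgeFinset.card = n ^ 2 / 4 := by
  have hb : 4 * b ≤ n := by exact_mod_cast (by linarith : (4 * b : ℝ) ≤ n)
  obtain ⟨c, rfl⟩ := Nat.exists_eq_add_of_le hb
  rw [card_edgeFinset_SGraph, Nat.add_sub_cancel_left, Nat.div_two_mul_sub_div_two,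
    Nat.four_mul_add_sq_div_four]

/-- For nonnegative integers `b` and `n` with `n/6 ≤ b ≤ n/4`, the blow-up `S_{b,n}` of
the 3-prism graph has exactly `⌊n²/4⌋` edges. -/
theorem SGraph_edge_card (b n : ℕ) (h1 : (n : ℝ) / 6 ≤ b) (h2 : (b : ℝ) ≤ n / 4) :
    (SGraph b n).edgeFinset.card = n ^ 2 / 4 :=
  SGraph_edge_card_general b n h2
end

section
/- Let G be a graph on n vertices with m edges, t triangles and book number b. Then (6b - n)·t ≥ b·(Σ_v d(v)² - nm). -/
/-!
Write `c(u, v)` for the number of common neighbours of `u` and `v`. Inclusion–exclusion gives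
`d(u) + d(v) ≤ n + c(u, v)` for every pair, and
`d(u) + d(v) + d(w) ≤ n + c(u, v) + c(u, w) + c(v, w)` for every triple. Summing the latter over
the ordered triangles `(u, v, w)` and grouping by the edge `uv` shows that
`Σ c(u, v) (6 c(u, v) + 2n - 3 (d(u) + d(v)))`, taken over ordered edges, is nonnegative. Each
term is at most `(6b - n) c(u, v) - 3b (d(u) + d(v)) + 3bn` because `c(u, v) ≤ b` and by the pair
inequality, and these majorants sum to `6 ((6b - n) t - b Σ d² + bnm)`, using
`Σ c(u, v) = 6t`, `Σ (d(u) + d(v)) = 2 Σ d²` and the fact that there are `2m` ordered edges.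
-/

open Finset SimpleGraph

theorem Finset.card_add_card_add_card_le {α : Type*} [DecidableEq α] (s t u : Finset α) :
    #s + #t + #u ≤ #(s ∪ t ∪ u) + #(s ∩ t) + #(s ∩ u) + #(t ∩ u) := by
  have hst := card_union_add_card_inter s t
  have hstu := card_union_add_card_inter (s ∪ t) u
  have hcap : #((s ∪ t) ∩ u) ≤ #(s ∩ u) + #(t ∩ u) := by
    rw [union_inter_distrib_right]
    exact card_union_le _ _
  omega

namespace SimpleGraph

variable {V : Type*} [Fintype V] (G : SimpleGraph V) [DecidableRel G.Adj]

lemma sum_sum_neighborFinset_eq_sum_degree_smul {M : Type*} [AddCommMonoid M] (f : V → M) :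
    ∑ u, ∑ v ∈ G.neighborFinset u, f v = ∑ v, G.degree v • f v := by
  rw [sum_comm' (t' := univ) (s' := fun v => G.neighborFinset v) fun u v => by simp [adj_comm]]
  simp

def orderedTriangles : Finset (V × V × V) :=
  {q | G.Adj q.1 q.2.1 ∧ G.Adj q.1 q.2.2 ∧ G.Adj q.2.1 q.2.2}

lemma sum_orderedTriangles_rotate {M : Type*} [AddCommMonoid M] (F : V × V × V → M) :
    ∑ q ∈ G.orderedTriangles, F (q.2.1, q.2.2, q.1) = ∑ q ∈ G.orderedTriangles, F q :=
  sum_nbij' (fun q => (q.2.1, q.2.2, q.1)) (fun q => (q.2.2, q.1, q.2.1))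
    (by simp +contextual [orderedTriangles, adj_comm])
    (by simp +contextual [orderedTriangles, adj_comm]) (by simp) (by simp) (by simp)

lemma three_smul_sum_orderedTriangles {M : Type*} [AddCommMonoid M] (f : V → V → M) :
    3 • ∑ q ∈ G.orderedTriangles, f q.1 q.2.1 =
      ∑ q ∈ G.orderedTriangles, (f q.1 q.2.1 + f q.2.1 q.2.2 + f q.2.2 q.1) := by
  have h₁ := G.sum_orderedTriangles_rotate fun q => f q.1 q.2.1
  have h₂ := G.sum_orderedTriangles_rotate fun q => f q.2.1 q.2.2
  rw [sum_add_distrib, sum_add_distrib, h₂, h₁, succ_nsmul, succ_nsmul, one_nsmul]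

variable [DecidableEq V]

def codegree (u v : V) : ℕ := #(G.neighborFinset u ∩ G.neighborFinset v)

lemma codegree_comm (u v : V) : G.codegree u v = G.codegree v u := by
  rw [codegree, codegree, inter_comm]

lemma degree_add_degree_le (u v : V) :
    G.degree u + G.degree v ≤ Fintype.card V + G.codegree u v := by
  rw [← card_neighborFinset_eq_degree, ← card_neighborFinset_eq_degree, codegree,
    ← card_union_add_card_inter]
  exact Nat.add_le_add_right (card_le_univ _) _

lemma degree_add_degree_add_degree_le (u v w : V) :
    G.degree u + G.degree v + G.degree w ≤
      Fintype.card V + G.codegree u v + G.codegree u w + G.codegree v w := by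
  simp only [← card_neighborFinset_eq_degree, codegree]
  exact (card_add_card_add_card_le _ _ _).trans (by gcongr; exact card_le_univ _)

lemma sum_orderedTriangles_eq_sum_codegree_smul {M : Type*} [AddCommMonoid M] (f : V → V → M) :
    ∑ q ∈ G.orderedTriangles, f q.1 q.2.1 =
      ∑ u, ∑ v ∈ G.neighborFinset u, G.codegree u v • f u v := by
  simp only [orderedTriangles, sum_filter, Fintype.sum_prod_type]
  refine sum_congr rfl fun u _ => ?_
  rw [neighborFinset_eq_filter, sum_filter]
  refine sum_congr rfl fun v _ => ?_
  by_cases huv : G.Adj u v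
  · simp only [huv, true_and, if_true, ← sum_filter, sum_const, codegree,
      neighborFinset_eq_filter, filter_and]
  · simp [huv]

lemma card_filter_orderedTriangles {a b c : V} (hab : G.Adj a b) (hac : G.Adj a c)
    (hbc : G.Adj b c) :
    #{q ∈ G.orderedTriangles | {q.1, q.2.1, q.2.2} = ({a, b, c} : Finset V)} = 6 := by
  have hfiber : {q ∈ G.orderedTriangles | {q.1, q.2.1, q.2.2} = ({a, b, c} : Finset V)} =
      {(a, b, c), (a, c, b), (b, a, c), (b, c, a), (c, a, b), (c, b, a)} := by
    ext ⟨x, y, z⟩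
    simp only [orderedTriangles, mem_filter, mem_univ, true_and, mem_insert, mem_singleton,
      Prod.mk.injEq]
    constructor
    · rintro ⟨⟨hxy, hxz, hyz⟩, hxyz⟩
      have hx : x ∈ ({a, b, c} : Finset V) := by simp [← hxyz]
      have hy : y ∈ ({a, b, c} : Finset V) := by simp [← hxyz]
      have hz : z ∈ ({a, b, c} : Finset V) := by simp [← hxyz]
      simp only [mem_insert, mem_singleton] at hx hy hz
      rcases hx with rfl | rfl | rfl <;> rcases hy with rfl | rfl | rfl <;>
        rcases hz with rfl | rfl | rfl <;> simp_all
    · rintro (h | h | h | h | h | h) <;> obtain ⟨rfl, rfl, rfl⟩ := h <;>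
        refine ⟨by simp [hab, hac, hbc, hab.symm, hac.symm, hbc.symm], ?_⟩ <;>
        ext <;> simp <;> tauto
  rw [hfiber]
  simp [hab.ne, hac.ne, hbc.ne, hab.ne', hac.ne', hbc.ne']

lemma card_orderedTriangles : #G.orderedTriangles = 6 * #(G.cliqueFinset 3) := by
  rw [card_eq_sum_card_fiberwise (f := fun q => ({q.1, q.2.1, q.2.2} : Finset V))
    (t := G.cliqueFinset 3), mul_comm, ← smul_eq_mul, ← sum_const]
  · refine sum_congr rfl fun s hs => ?_
    obtain ⟨a, b, c, hab, hac, hbc, rfl⟩ := is3Clique_iff.1 (mem_cliqueFinset_iff.1 hs)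
    exact G.card_filter_orderedTriangles hab hac hbc
  · intro q hq
    simp only [orderedTriangles, coe_filter, mem_univ, true_and, Set.mem_ofPred_eq] at hq
    exact mem_cliqueFinset_iff.2 (is3Clique_triple_iff.2 hq)

lemma sum_sum_neighborFinset_codegree :
    ∑ u, ∑ v ∈ G.neighborFinset u, G.codegree u v = 6 * #(G.cliqueFinset 3) := by
  have h := G.sum_orderedTriangles_eq_sum_codegree_smul fun _ _ => 1
  rw [← card_eq_sum_ones, card_orderedTriangles] at h
  simpa using h.symm

lemma sum_codegree_mul_degree_add_degree_le :
    ∑ u, ∑ v ∈ G.neighborFinset u, G.codegree u v * (3 * (G.degree u + G.degree v)) ≤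
      ∑ u, ∑ v ∈ G.neighborFinset u,
        G.codegree u v * (6 * G.codegree u v + 2 * Fintype.card V) := by
  have hd := G.sum_orderedTriangles_eq_sum_codegree_smul fun u v => 3 * (G.degree u + G.degree v)
  have hc := G.sum_orderedTriangles_eq_sum_codegree_smul fun u v =>
    6 * G.codegree u v + 2 * Fintype.card V
  simp only [smul_eq_mul] at hd hc
  rw [← hd, ← hc]
  refine le_of_nsmul_le_nsmul_right three_ne_zero ?_
  have hd₃ := G.three_smul_sum_orderedTriangles fun u v => 3 * (G.degree u + G.degree v)
  have hc₃ := G.three_smul_sum_orderedTriangles fun u v => 6 * G.codegree u v + 2 * Fintype.card V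
  rw [hd₃, hc₃]
  refine sum_le_sum fun q _ => ?_
  have := G.degree_add_degree_add_degree_le q.1 q.2.1 q.2.2
  rw [G.codegree_comm q.2.2 q.1]
  omega

lemma sum_sum_neighborFinset_nonneg_of_codegree_le (b : ℕ)
    (hb : ∀ u, ∀ v ∈ G.neighborFinset u, G.codegree u v ≤ b) :
    0 ≤ ∑ u, ∑ v ∈ G.neighborFinset u, ((6 * b - Fintype.card V) * (G.codegree u v : ℝ) -
      3 * b * (G.degree u + G.degree v) + 3 * b * Fintype.card V) := by
  have key : ∑ u, ∑ v ∈ G.neighborFinset u,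
      (G.codegree u v : ℝ) * (3 * (G.degree u + G.degree v)) ≤
      ∑ u, ∑ v ∈ G.neighborFinset u,
        (G.codegree u v : ℝ) * (6 * G.codegree u v + 2 * Fintype.card V) := by
    exact_mod_cast G.sum_codegree_mul_degree_add_degree_le
  calc (0 : ℝ) ≤ ∑ u, ∑ v ∈ G.neighborFinset u, ((G.codegree u v : ℝ) *
        (6 * G.codegree u v + 2 * Fintype.card V) -
        G.codegree u v * (3 * (G.degree u + G.degree v))) := by
        simp only [sum_sub_distrib]
        linarith
    _ ≤ _ := sum_le_sum fun u _ => sum_le_sum fun v hv => by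
        have hc : (G.codegree u v : ℝ) ≤ b := by exact_mod_cast hb u v hv
        have hs : (G.degree u + G.degree v : ℝ) ≤ Fintype.card V + G.codegree u v := by
          exact_mod_cast G.degree_add_degree_le u v
        -- the difference of the two sides is `3 (b - c) (n + 2c - d u - d v)`
        nlinarith [mul_nonneg (sub_nonneg.2 hc) (by positivity : (0 : ℝ) ≤ G.codegree u v)]

end SimpleGraph

/-- Bollobás–Nikiforov: if `G` has `n` vertices, `m` edges, `t` triangles and book
number `b` (the maximum, over adjacent pairs, of the number of common neighbors), then
`(6b - n)·t ≥ b·(Σ_v d(v)² - nm)`. -/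
theorem bollobas_nikiforov {V : Type*} [Fintype V] [DecidableEq V] (G : SimpleGraph V)
    [DecidableRel G.Adj] (n m t b : ℕ) (hn : Fintype.card V = n)
    (hm : G.edgeFinset.card = m) (ht : (G.cliqueFinset 3).card = t)
    (hb : b = (Finset.univ.filter fun p : V × V => G.Adj p.1 p.2).sup
      fun p => (G.neighborFinset p.1 ∩ G.neighborFinset p.2).card) :
    (6 * (b : ℝ) - n) * t ≥ (b : ℝ) * ((∑ v : V, (G.degree v : ℝ) ^ 2) - n * m) := by
  subst hn hm ht
  have hcodegree : ∀ u, ∀ v ∈ G.neighborFinset u, G.codegree u v ≤ b := fun u v huv => by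
    have hmem : (u, v) ∈ (univ.filter fun p : V × V => G.Adj p.1 p.2) := by simpa using huv
    have h := le_sup (f := fun p : V × V => #(G.neighborFinset p.1 ∩ G.neighborFinset p.2)) hmem
    rwa [← hb] at h
  have htriangles : ∑ u, ∑ v ∈ G.neighborFinset u, (G.codegree u v : ℝ) =
      6 * #(G.cliqueFinset 3) := by
    exact_mod_cast G.sum_sum_neighborFinset_codegree
  have hedges : ∑ u, (G.degree u : ℝ) = 2 * #G.edgeFinset := by
    exact_mod_cast G.sum_degrees_eq_twice_card_edges
  have h := G.sum_sum_neighborFinset_nonneg_of_codegree_le b hcodegree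
  simp only [sum_add_distrib, sum_sub_distrib, ← mul_sum, sum_const, nsmul_eq_mul,
    card_neighborFinset_eq_degree, htriangles, sum_sum_neighborFinset_eq_sum_degree_smul,
    ← sq] at h
  rw [← sum_mul, hedges] at h
  linarith
end

section
/- Let G be a graph on n vertices with minimum degree at least (1/2 - ε)n and book number at most (1/6 + ε/10)n. Then for any vertex v and any x ∈ N(v), if x has at least one neighbor in N(v), then the number of neighbors of x inside N(v) is at least (1/6 - 4ε)n. -/
open Finset SimpleGraph

/-- Let `G` be a graph on `n` vertices with minimum degree at least `(1/2 - ε)n` and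
book number at most `(1/6 + ε/10)n`, where `0 < ε ≤ 1/100`. Then for any vertex `v` and
any `x ∈ N(v)`, if `x` has at least one neighbor in `N(v)`, then `x` has at least
`(1/6 - 4ε)n` neighbors inside `N(v)`. -/
theorem claim_B {V : Type*} [Fintype V] [DecidableEq V] (G : SimpleGraph V)
    [DecidableRel G.Adj] (n : ℕ) (ε : ℝ) (hε0 : 0 < ε) (hε : ε ≤ 1 / 100)
    (hn : Fintype.card V = n)
    (hmindeg : ∀ u : V, (1 / 2 - ε) * n ≤ (G.degree u : ℝ))
    (hbook : ∀ u w : V, G.Adj u w →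
      ((G.neighborFinset u ∩ G.neighborFinset w).card : ℝ) ≤ (1 / 6 + ε / 10) * n)
    (v x : V) (hx : G.Adj v x) (hnb : ∃ y, G.Adj v y ∧ G.Adj x y) :
    (1 / 6 - 4 * ε) * n ≤ ((G.neighborFinset x ∩ G.neighborFinset v).card : ℝ) := by
  obtain ⟨y, hvy, hxy⟩ := hnb
  set A := G.neighborFinset v with hA
  set B := G.neighborFinset x with hB
  set C := G.neighborFinset y with hC
  have h1 : (A ∪ B).card + (A ∩ B).card = A.card + B.card :=
    Finset.card_union_add_card_inter A B
  have h2 : C.card ≤ (C ∩ A).card + (C ∩ B).card + (C \ (A ∪ B)).card := by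
    have hsub : C ⊆ (C ∩ A) ∪ (C ∩ B) ∪ (C \ (A ∪ B)) := by
      intro z hz
      by_cases hzA : z ∈ A
      · simp [hz, hzA]
      · by_cases hzB : z ∈ B
        · simp [hz, hzB]
        · simp [hz, hzA, hzB]
    calc C.card ≤ ((C ∩ A) ∪ (C ∩ B) ∪ (C \ (A ∪ B))).card := Finset.card_le_card hsub
      _ ≤ ((C ∩ A) ∪ (C ∩ B)).card + (C \ (A ∪ B)).card := Finset.card_union_le _ _
      _ ≤ (C ∩ A).card + (C ∩ B).card + (C \ (A ∪ B)).card := by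
          gcongr; exact Finset.card_union_le _ _
  have h3 : (A ∪ B).card + (C \ (A ∪ B)).card ≤ n := by
    rw [← Finset.card_union_of_disjoint Finset.disjoint_sdiff, ← hn]
    exact Finset.card_le_univ _
  have hdA : (1 / 2 - ε) * n ≤ (A.card : ℝ) := by
    simpa [hA, G.card_neighborFinset_eq_degree] using hmindeg v
  have hdB : (1 / 2 - ε) * n ≤ (B.card : ℝ) := by
    simpa [hB, G.card_neighborFinset_eq_degree] using hmindeg x
  have hdC : (1 / 2 - ε) * n ≤ (C.card : ℝ) := by
    simpa [hC, G.card_neighborFinset_eq_degree] using hmindeg y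
  have hb1 : ((C ∩ A).card : ℝ) ≤ (1 / 6 + ε / 10) * n := by
    have := hbook v y hvy
    rwa [Finset.inter_comm] at this
  have hb2 : ((C ∩ B).card : ℝ) ≤ (1 / 6 + ε / 10) * n := by
    have := hbook x y hxy
    rwa [Finset.inter_comm] at this
  have hgoal : ((B ∩ A).card : ℝ) = ((G.neighborFinset x ∩ G.neighborFinset v).card : ℝ) := by
    rw [hA, hB]
  rw [← hgoal, Finset.inter_comm B A]
  have h1' : ((A ∪ B).card : ℝ) + ((A ∩ B).card : ℝ) = (A.card : ℝ) + (B.card : ℝ) := by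
    exact_mod_cast h1
  have h2' : (C.card : ℝ) ≤ ((C ∩ A).card : ℝ) + ((C ∩ B).card : ℝ) + ((C \ (A ∪ B)).card : ℝ) := by
    exact_mod_cast h2
  have h3' : ((A ∪ B).card : ℝ) + ((C \ (A ∪ B)).card : ℝ) ≤ (n : ℝ) := by
    exact_mod_cast h3
  have hn0 : (0 : ℝ) ≤ (n : ℝ) := Nat.cast_nonneg n
  nlinarith [mul_nonneg (le_of_lt hε0) hn0]
end

section
/- Let G be a graph on n vertices with minimum degree at least (1/2 - ε)n and book number at most (1/6 + ε/10)n, and let v be a vertex and x, y ∈ N(v) with x adjacent to y. Then the number of common neighbors of x and y lying outside N(v) is at least (1/6 - 4ε)n. -/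
open Finset SimpleGraph

/-- Let `G` be a graph on `n` vertices with minimum degree at least `(1/2 - ε)n` and
book number at most `(1/6 + ε/10)n`, and let `v` be a vertex and `x, y ∈ N(v)` with `x`
adjacent to `y`. Then the number of common neighbors of `x` and `y` lying outside
`N(v)` is at least `(1/6 - 4ε)n`. -/
theorem common_neighbors_outside {V : Type*} [Fintype V] [DecidableEq V]
    (G : SimpleGraph V) [DecidableRel G.Adj] (n : ℕ) (ε : ℝ) (hε0 : 0 < ε)
    (hn : Fintype.card V = n)
    (hmindeg : ∀ u : V, (1 / 2 - ε) * n ≤ (G.degree u : ℝ))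
    (hbook : ∀ u w : V, G.Adj u w →
      ((G.neighborFinset u ∩ G.neighborFinset w).card : ℝ) ≤ (1 / 6 + ε / 10) * n)
    (v x y : V) (hvx : G.Adj v x) (hvy : G.Adj v y) (hxy : G.Adj x y) :
    (1 / 6 - 4 * ε) * n ≤
      (((G.neighborFinset x ∩ G.neighborFinset y) \ G.neighborFinset v).card : ℝ) := by
  set A := G.neighborFinset x
  set B := G.neighborFinset y
  set C := G.neighborFinset v
  have hsplit : (A ∩ B) \ C = (A \ C) ∩ (B \ C) := by
    ext w; simp only [mem_sdiff, mem_inter]; tauto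
  have hunion : ((A \ C) ∪ (B \ C)).card ≤ n - C.card := by
    have hsub : (A \ C) ∪ (B \ C) ⊆ Cᶜ := by
      intro w hw
      simp only [mem_union, mem_sdiff] at hw
      simp only [mem_compl]
      tauto
    calc ((A \ C) ∪ (B \ C)).card ≤ Cᶜ.card := card_le_card hsub
      _ = n - C.card := by rw [card_compl, hn]
  have hcardCle : C.card ≤ n := by
    rw [← hn]; exact card_le_univ _
  have hkey : (A \ C).card + (B \ C).card ≤ ((A ∩ B) \ C).card + (n - C.card) := by
    rw [hsplit]
    calc (A \ C).card + (B \ C).card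
        = ((A \ C) ∪ (B \ C)).card + ((A \ C) ∩ (B \ C)).card :=
          (card_union_add_card_inter _ _).symm
      _ ≤ (n - C.card) + ((A \ C) ∩ (B \ C)).card := by
          exact Nat.add_le_add_right hunion _
      _ = ((A \ C) ∩ (B \ C)).card + (n - C.card) := by ring
  have hkeyR : ((A \ C).card : ℝ) + (B \ C).card ≤ (((A ∩ B) \ C).card : ℝ) + (n - C.card) := by
    have h := (Nat.cast_le (α := ℝ)).mpr hkey
    push_cast [Nat.cast_sub hcardCle] at h
    exact h
  have hAC : (A.card : ℝ) = (A \ C).card + (A ∩ C).card := by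
    exact_mod_cast (card_sdiff_add_card_inter A C).symm
  have hBC : (B.card : ℝ) = (B \ C).card + (B ∩ C).card := by
    exact_mod_cast (card_sdiff_add_card_inter B C).symm
  have hA : (1 / 2 - ε) * n ≤ (A.card : ℝ) := by
    simpa [A, G.card_neighborFinset_eq_degree] using hmindeg x
  have hB : (1 / 2 - ε) * n ≤ (B.card : ℝ) := by
    simpa [B, G.card_neighborFinset_eq_degree] using hmindeg y
  have hC : (1 / 2 - ε) * n ≤ (C.card : ℝ) := by
    simpa [C, G.card_neighborFinset_eq_degree] using hmindeg v
  have hAvC : ((A ∩ C).card : ℝ) ≤ (1 / 6 + ε / 10) * n := by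
    have := hbook v x hvx
    rwa [inter_comm] at this
  have hBvC : ((B ∩ C).card : ℝ) ≤ (1 / 6 + ε / 10) * n := by
    have := hbook v y hvy
    rwa [inter_comm] at this
  have hn0 : (0:ℝ) ≤ n := Nat.cast_nonneg n
  have hen : 0 ≤ ε * n := mul_nonneg hε0.le hn0
  linarith
end

section
/- Let G be a graph on n vertices such that every edge of G lies in at most b triangles and the minimum degree of G is at least δ. If v is a vertex and x, y are adjacent vertices in N(v), then the degree of x inside N(v) is at least 2δ - n + |N(v)| - 2b. -/
open Finset SimpleGraph

/-- Let `G` be a graph on `n` vertices such that every edge of `G` lies in at most `b`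
triangles and the minimum degree of `G` is at least `δ`. If `v` is a vertex and `x, y`
are adjacent vertices in `N(v)`, then the degree of `x` inside `N(v)` is at least
`2δ - n + |N(v)| - 2b`. -/
theorem claim_B_core {V : Type*} [Fintype V] [DecidableEq V] (G : SimpleGraph V)
    [DecidableRel G.Adj] (n b δ : ℕ) (hn : Fintype.card V = n)
    (hbook : ∀ u w : V, G.Adj u w →
      (G.neighborFinset u ∩ G.neighborFinset w).card ≤ b)
    (hmindeg : ∀ u : V, δ ≤ G.degree u)
    (v x y : V) (hvx : G.Adj v x) (hvy : G.Adj v y) (hxy : G.Adj x y) :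
    2 * (δ : ℝ) - n + (G.degree v : ℝ) - 2 * b
      ≤ ((G.neighborFinset x ∩ G.neighborFinset v).card : ℝ) := by
  classical
  set Nx := G.neighborFinset x with hNx
  set Ny := G.neighborFinset y with hNy
  set Nv := G.neighborFinset v with hNv
  have h1 : (Nx ∩ Nv).card + (Nx \ Nv).card = Nx.card :=
    Finset.card_inter_add_card_sdiff Nx Nv
  have h2 : (Ny ∩ Nv).card + (Ny \ Nv).card = Ny.card :=
    Finset.card_inter_add_card_sdiff Ny Nv
  have h3 : ((Nx \ Nv) ∪ (Ny \ Nv)).card + ((Nx \ Nv) ∩ (Ny \ Nv)).card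
      = (Nx \ Nv).card + (Ny \ Nv).card :=
    Finset.card_union_add_card_inter _ _
  have hdisj : Disjoint ((Nx \ Nv) ∪ (Ny \ Nv)) Nv := by
    simp [Finset.disjoint_union_left, Finset.sdiff_disjoint]
  have h4 : ((Nx \ Nv) ∪ (Ny \ Nv)).card + Nv.card ≤ n := by
    have := Finset.card_union_of_disjoint hdisj
    calc ((Nx \ Nv) ∪ (Ny \ Nv)).card + Nv.card
        = (((Nx \ Nv) ∪ (Ny \ Nv)) ∪ Nv).card := this.symm
      _ ≤ Fintype.card V := Finset.card_le_univ _
      _ = n := hn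
  have h5 : ((Nx \ Nv) ∩ (Ny \ Nv)).card ≤ b := by
    refine le_trans (Finset.card_le_card ?_) (hbook x y hxy)
    exact Finset.inter_subset_inter (Finset.sdiff_subset) (Finset.sdiff_subset)
  have h6 : (Ny ∩ Nv).card ≤ b := by
    have := hbook v y hvy
    rwa [Finset.inter_comm] at this
  have h7 : δ ≤ Nx.card := hmindeg x
  have h8 : δ ≤ Ny.card := hmindeg y
  have hdeg : G.degree v = Nv.card := rfl
  have key : 2 * δ + Nv.card ≤ (Nx ∩ Nv).card + 2 * b + n := by omega
  rw [hdeg]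
  have := Nat.cast_le (α := ℝ) |>.2 key
  push_cast at this
  linarith
end

section
/- Let n be even and let G be a triangle-free graph on n vertices with at least n²/4 edges. Then G is the balanced complete bipartite graph K_{n/2,n/2}. -/
/-!
A triangle-free graph on `n` vertices has at most as many edges as the Turán graph
`T(n, 2)`, which has at most `n² / 4` edges. A triangle-free graph with at least `n² / 4` edges
is therefore Turán-maximal, and by the uniqueness part of Turán's theorem it is isomorphic to
`T(n, 2)`; for even `n` this is the complete bipartite graph with two parts of size `n / 2`.
-/

open Finset SimpleGraph

namespace SimpleGraph

variable {V : Type*} [Fintype V] {G : SimpleGraph V} [DecidableRel G.Adj] {r : ℕ}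

theorem card_edgeFinset_turanGraph_le_div (n : ℕ) (hr : 0 < r) :
    #(turanGraph n r).edgeFinset ≤ (r - 1) * n ^ 2 / (2 * r) :=
  (Nat.le_div_iff_mul_le (by positivity)).2 <| by
    rw [mul_comm]; exact mul_card_edgeFinset_turanGraph_le

theorem isTuranMaximal_of_card_edgeFinset_turanGraph_le (hG : G.CliqueFree (r + 1))
    (hcard : #(turanGraph (Fintype.card V) r).edgeFinset ≤ #G.edgeFinset) :
    G.IsTuranMaximal r := by
  refine ⟨hG, fun H _ hH ↦ ?_⟩
  rw [card_edgeFinset_turanGraph] at hcard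
  exact hH.card_edgeFinset_le.trans hcard

def completeEquipartiteGraph.completeBipartiteGraph (t : ℕ) :
    completeEquipartiteGraph 2 t ≃g completeBipartiteGraph (Fin t) (Fin t) where
  toEquiv := (finTwoEquiv.prodCongr (.refl _)).trans (Equiv.boolProdEquivSum _)
  map_rel_iff' := by
    rintro ⟨i, x⟩ ⟨j, y⟩
    fin_cases i <;> fin_cases j <;> simp [finTwoEquiv]

def turanGraphTwoMulIsoCompleteBipartite (m : ℕ) :
    turanGraph (2 * m) 2 ≃g completeBipartiteGraph (Fin m) (Fin m) :=
  completeEquipartiteGraph.turanGraph.symm.trans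
    (completeEquipartiteGraph.completeBipartiteGraph m)

end SimpleGraph

theorem mantel_equality_general {V : Type*} [Fintype V] (G : SimpleGraph V)
    [DecidableRel G.Adj] (n : ℕ) (hn : Fintype.card V = n) (heven : Even n)
    (hfree : G.CliqueFree 3) (hm : n ^ 2 / 4 ≤ G.edgeFinset.card) :
    Nonempty (G ≃g completeBipartiteGraph (Fin (n / 2)) (Fin (n / 2))) := by
  obtain ⟨m, rfl⟩ := heven.two_dvd
  have hmax : G.IsTuranMaximal 2 :=
    isTuranMaximal_of_card_edgeFinset_turanGraph_le hfree <| by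
      rw [hn]; exact (card_edgeFinset_turanGraph_le_div _ two_pos).trans (by norm_num [hm])
  obtain ⟨f⟩ := hmax.nonempty_iso_turanGraph
  rw [hn] at f
  rw [Nat.mul_div_cancel_left m two_pos]
  exact ⟨f.trans (turanGraphTwoMulIsoCompleteBipartite m)⟩

/-- Equality case of Mantel's theorem: if `n` is even and `G` is a triangle-free graph
on `n` vertices with at least `n²/4` edges, then `G` is the balanced complete bipartite
graph `K_{n/2, n/2}`. -/
theorem mantel_equality {V : Type*} [Fintype V] [DecidableEq V] (G : SimpleGraph V)
    [DecidableRel G.Adj] (n : ℕ) (hn : Fintype.card V = n) (heven : Even n)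
    (hfree : G.CliqueFree 3) (hm : n ^ 2 / 4 ≤ G.edgeFinset.card) :
    Nonempty (G ≃g completeBipartiteGraph (Fin (n / 2)) (Fin (n / 2))) :=
  mantel_equality_general G n hn heven hfree hm
end
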